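/- Let s be a binary string with |s| ≥ 2 and t_1,…,t_n binary strings with Σ_{i=1}^n |t_i| = |s|. Every tree decomposition of the graph G(s; t_1,…,t_n) of width at most 16 with at most |s| bags is a path decomposition: it has exactly |s| bags, its underlying tree is a path, and there is an ordering X_1,…,X_{|s|} of the bags along this path such that C_i ∪ C_{i+1} ⊆ X_i for each 1 ≤ i ≤ |s|. -/

import Mathlib

/-- A solution of the Orthogonal Vector Crafting instance `(s; t_1,…,t_n)`: a reordering `u`
of the collection `ts` such that at no position do `s` and the concatenation of `u` both
have a `1`. -/
def OVCSol (s : List Bool) (ts : List (List Bool)) : Prop :=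
  ∃ u : List (List Bool), u.Perm ts ∧
    ∀ p : ℕ, ¬(s.getD p false = true ∧ u.flatten.getD p false = true)

/-- Vertices of the graph `G(s; t_1,…,t_n)`:
`Sum.inl (Sum.inl (i, a))` is the `a`-th vertex of the `6`-clique `C_{i+1}`,
`Sum.inl (Sum.inr k)` is the vertex `s_{k+1}` (present when `s(k+1) = 1`),
`Sum.inr (Sum.inl ⟨i, j, a⟩)` is the `a`-th vertex of the `2`-clique `T_{i+1,j+1}`, and
`Sum.inr (Sum.inr ⟨i, j⟩)` is the vertex `t_{i+1,j+1}` (present when `t_{i+1}(j+1) = 1`). -/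
abbrev GV (s : List Bool) (ts : List (List Bool)) : Type :=
  ((Fin (s.length + 1) × Fin 6) ⊕ {k : Fin s.length // s.get k = true}) ⊕
  ((Σ i : Fin ts.length, Fin ((ts.get i).length + 1) × Fin 2) ⊕
    (Σ i : Fin ts.length, {j : Fin (ts.get i).length // (ts.get i).get j = true}))

/-- The edges of `G(s; t_1,…,t_n)` (up to symmetry): all pairs inside each clique `C_i`
resp. `T_{i,j}`, all pairs between consecutive cliques `C_i, C_{i+1}` resp.
`T_{i,j}, T_{i,j+1}`, each `s_k` joined to all of `C_k ∪ C_{k+1}`, and each `t_{i,j}` joined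
to all of `T_{i,j} ∪ T_{i,j+1}`. -/
def gRel (s : List Bool) (ts : List (List Bool)) : GV s ts → GV s ts → Prop
  | Sum.inl (Sum.inl (i, a)), Sum.inl (Sum.inl (j, b)) =>
      (i = j ∧ a ≠ b) ∨ i.val + 1 = j.val
  | Sum.inl (Sum.inl (i, _)), Sum.inl (Sum.inr k) =>
      i.val = k.val.val ∨ i.val = k.val.val + 1
  | Sum.inr (Sum.inl a), Sum.inr (Sum.inl b) =>
      a.1 = b.1 ∧ ((a.2.1.val = b.2.1.val ∧ a.2.2 ≠ b.2.2) ∨ a.2.1.val + 1 = b.2.1.val)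
  | Sum.inr (Sum.inl a), Sum.inr (Sum.inr b) =>
      a.1 = b.1 ∧ (a.2.1.val = b.2.val.val ∨ a.2.1.val = b.2.val.val + 1)
  | _, _ => False

/-- The graph `G(s; t_1,…,t_n)`. -/
def GGraph (s : List Bool) (ts : List (List Bool)) : SimpleGraph (GV s ts) :=
  SimpleGraph.fromRel (gRel s ts)

/-- `(T, X)` is a valid decomposition of `G`: every vertex is in some bag, for every vertex
the set of nodes whose bag contains it induces a connected (hence nonempty) subgraph of `T`,
and every edge of `G` is contained in some bag. -/
def IsValidDecomp {V ι : Type} (G : SimpleGraph V) (T : SimpleGraph ι) (X : ι → Set V) :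
    Prop :=
  (∀ v : V, ∃ t : ι, v ∈ X t) ∧
  (∀ v : V, (T.induce {t : ι | v ∈ X t}).Connected) ∧
  (∀ u v : V, G.Adj u v → ∃ t : ι, u ∈ X t ∧ v ∈ X t)

/-!
Write `K_i = C_i ∪ C_{i+1}`, a clique on `12` vertices. By the Helly property of subtrees of a
tree, every clique lies in some bag, say `K_i ⊆ X_{f(i)}`. A bag has at most `17` vertices, so it
contains at most two of the disjoint `6`-cliques `C_c`; hence `f` is injective and, since there
are at most `|s|` bags, bijective. The bags `f(i)` and `f(i+1)` share `C_{i+1}`, so every bag on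
the tree path between them contains `C_{i+1}` as well and must be one of the two: they are
adjacent. The consecutive pairs thus form a spanning path of `T`, and a tree, being minimally
connected, equals any connected spanning subgraph.
-/

namespace SimpleGraph

variable {ι : Type*} {T : SimpleGraph ι}

/-- In a tree these are exactly the vertex sets of subtrees. -/
def IsPathConvex (T : SimpleGraph ι) (S : Set ι) : Prop :=
  ∀ ⦃a b : ι⦄, a ∈ S → b ∈ S →
    ∀ p : T.Walk a b, p.IsPath → ∀ x ∈ p.support, x ∈ S

lemma IsPathConvex.inter {S S' : Set ι} (h : T.IsPathConvex S) (h' : T.IsPathConvex S') :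
    T.IsPathConvex (S ∩ S') :=
  fun _ _ ha hb p hp x hx => ⟨h ha.1 hb.1 p hp x hx, h' ha.2 hb.2 p hp x hx⟩

lemma IsAcyclic.isPathConvex_of_preconnected (hT : T.IsAcyclic) {S : Set ι}
    (hS : (T.induce S).Preconnected) : T.IsPathConvex S := by
  classical
  intro a b ha hb p hp x hx
  obtain ⟨w⟩ := hS ⟨a, ha⟩ ⟨b, hb⟩
  let w' : T.Walk a b := w.map (Embedding.induce S).toHom
  have hpq : (⟨p, hp⟩ : T.Path a b) = w'.toPath := (hT.subsingleton_path a b).elim _ _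
  have hxw : x ∈ w'.support := w'.support_toPath_subset_support (hpq ▸ hx)
  rw [show w'.support = _ from w.support_map _, List.mem_map] at hxw
  obtain ⟨y, -, rfl⟩ := hxw
  exact y.2

lemma Walk.exists_mem_support_isPath_of_isPath {x y z : ι} (r : T.Walk z x) (hr : r.IsPath)
    (p : T.Walk x y) (hp : p.IsPath) :
    ∃ m ∈ r.support, m ∈ p.support ∧ ∃ q : T.Walk z y, q.IsPath ∧ m ∈ q.support ∧
      q.support ⊆ r.support ++ p.support := by
  classical
  induction r with
  | nil =>
    exact ⟨_, Walk.start_mem_support _, p.start_mem_support, p, hp, p.start_mem_support,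
      fun _ h => List.mem_append_right _ h⟩
  | @cons u v w huv r ih =>
    rw [Walk.cons_isPath_iff] at hr
    by_cases hu : u ∈ p.support
    · exact ⟨u, by simp, hu, p.dropUntil u hu, hp.dropUntil hu, Walk.start_mem_support _,
        fun _ h => List.mem_append_right _ (Walk.support_dropUntil_subset_support _ _ h)⟩
    · obtain ⟨m, hmr, hmp, q, hq, hmq, hsub⟩ := ih hr.1 p hp
      have huq : u ∉ q.support := fun h => (List.mem_append.mp (hsub h)).elim hr.2 hu
      refine ⟨m, by simp [hmr], hmp, .cons huv q, hq.cons huq, by simp [hmq], ?_⟩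
      rw [Walk.support_cons, Walk.support_cons, List.cons_append]
      exact List.cons_subset_cons _ hsub

lemma Connected.inter_inter_nonempty (hT : T.Connected) {A B C : Set ι}
    (hA : T.IsPathConvex A) (hB : T.IsPathConvex B) (hC : T.IsPathConvex C)
    (hAB : (A ∩ B).Nonempty) (hBC : (B ∩ C).Nonempty) (hAC : (A ∩ C).Nonempty) :
    (A ∩ B ∩ C).Nonempty := by
  obtain ⟨x, hxA, hxB⟩ := hAB
  obtain ⟨y, hyB, hyC⟩ := hBC
  obtain ⟨z, hzA, hzC⟩ := hAC
  obtain ⟨p, hp⟩ := hT.exists_isPath x y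
  obtain ⟨r, hr⟩ := hT.exists_isPath z x
  obtain ⟨m, hmr, hmp, q, hq, hmq, -⟩ := r.exists_mem_support_isPath_of_isPath hr p hp
  exact ⟨m, ⟨hA hzA hxA r hr m hmr, hB hxB hyB p hp m hmp⟩, hC hzC hyC q hq m hmq⟩

theorem Connected.exists_forall_mem_of_pairwise_inter_nonempty (hT : T.Connected) {α : Type*}
    {K : Finset α} (hK : K.Nonempty) {S : α → Set ι} (hS : ∀ a ∈ K, T.IsPathConvex (S a))
    (hmeet : ∀ a ∈ K, ∀ b ∈ K, (S a ∩ S b).Nonempty) : ∃ t, ∀ a ∈ K, t ∈ S a := by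
  induction hK using Finset.Nonempty.cons_induction generalizing S with
  | singleton a =>
    obtain ⟨t, ht, -⟩ := hmeet a (Finset.mem_singleton_self a) a (Finset.mem_singleton_self a)
    exact ⟨t, by simpa using ht⟩
  | cons a K ha hK ih =>
    have hS' : ∀ b ∈ K, T.IsPathConvex (S b) := fun b hb => hS b (Finset.mem_cons_of_mem hb)
    have hmeet' : ∀ b ∈ K, ∀ c ∈ K, (S b ∩ S c).Nonempty := fun b hb c hc =>
      hmeet b (Finset.mem_cons_of_mem hb) c (Finset.mem_cons_of_mem hc)
    have hSa := hS a (Finset.mem_cons_self a K)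
    have hmeet_a : ∀ b ∈ K, (S a ∩ S b).Nonempty := fun b hb =>
      hmeet a (Finset.mem_cons_self a K) b (Finset.mem_cons_of_mem hb)
    -- the sets `S a ∩ S b` still meet pairwise, by the case of three sets
    obtain ⟨t, ht⟩ := ih (S := fun b => S a ∩ S b) (fun b hb => hSa.inter (hS' b hb))
      fun b hb c hc => (hT.inter_inter_nonempty hSa (hS' b hb) (hS' c hc) (hmeet_a b hb)
        (hmeet' b hb c hc) (hmeet_a c hc)).mono fun x hx => ⟨hx.1, hx.1.1, hx.2⟩
    obtain ⟨b, hb⟩ := hK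
    refine ⟨t, fun c hc => ?_⟩
    rcases Finset.mem_cons.mp hc with rfl | hc
    exacts [(ht b hb).1, (ht c hc).2]

lemma Walk.adj_of_forall_mem_support {x y : ι} (p : T.Walk x y) (hxy : x ≠ y)
    (h : ∀ u ∈ p.support, u = x ∨ u = y) : T.Adj x y := by
  cases p with
  | nil => exact absurd rfl hxy
  | @cons _ c _ hxc q =>
    rcases h c (by simp) with rfl | rfl
    · exact absurd rfl hxc.ne
    · exact hxc

lemma IsTree.adj_iff_of_adj_succ {n : ℕ} (hT : T.IsTree) (e : Fin n ≃ ι)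
    (h : ∀ i j : Fin n, i.val + 1 = j.val → T.Adj (e i) (e j)) (a b : Fin n) :
    T.Adj (e a) (e b) ↔ a.val + 1 = b.val ∨ b.val + 1 = a.val := by
  have := hT.connected.nonempty
  have hG : ((pathGraph n).map e.toEmbedding).Connected :=
    ⟨(pathGraph_preconnected n).map (Iso.map e _).toHom (Iso.map e _).surjective⟩
  have hle : (pathGraph n).map e.toEmbedding ≤ T := by
    intro u v huv
    obtain ⟨a, b, hab, rfl, rfl⟩ := (map_adj _ _ _ _).mp huv
    rcases pathGraph_adj.mp hab with hab | hab
    exacts [h a b hab, (h b a hab).symm]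
  rw [← (isTree_iff_minimal_connected.mp hT).eq_of_le hG hle]
  exact map_adj_apply.trans pathGraph_adj

end SimpleGraph

section Decomposition

variable {V ι : Type} {G : SimpleGraph V} {T : SimpleGraph ι} {X : ι → Set V}

lemma IsValidDecomp.isPathConvex (hT : T.IsAcyclic) (hX : IsValidDecomp G T X) (v : V) :
    T.IsPathConvex {t | v ∈ X t} :=
  hT.isPathConvex_of_preconnected (hX.2.1 v).preconnected

theorem IsValidDecomp.exists_subset_of_isClique (hT : T.IsTree) (hX : IsValidDecomp G T X)
    {K : Finset V} (hK : K.Nonempty) (hclique : G.IsClique (K : Set V)) :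
    ∃ t, (K : Set V) ⊆ X t := by
  refine hT.connected.exists_forall_mem_of_pairwise_inter_nonempty hK
    (fun v _ => hX.isPathConvex hT.isAcyclic v) fun v hv w hw => ?_
  obtain rfl | hvw := eq_or_ne v w
  · obtain ⟨t, ht⟩ := hX.1 v
    exact ⟨t, ht, ht⟩
  · exact hX.2.2 v w (hclique hv hw hvw)

end Decomposition

section PathCover

variable {ι : Type*} {n : ℕ} {P : ι → Fin (n + 1) → Prop} {f : Fin n → ι}

lemma injective_of_covers_consecutive (hf : ∀ i, P (f i) i.castSucc ∧ P (f i) i.succ)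
    (hsep : ∀ t (i : Fin n) c, P t i.castSucc → P t i.succ → P t c →
      c = i.castSucc ∨ c = i.succ) :
    Function.Injective f := by
  intro i j hij
  have h₀ := hsep (f i) i j.castSucc (hf i).1 (hf i).2 (hij ▸ (hf j).1)
  have h₁ := hsep (f i) i j.succ (hf i).1 (hf i).2 (hij ▸ (hf j).2)
  simp only [Fin.ext_iff, Fin.val_castSucc, Fin.val_succ] at h₀ h₁
  exact Fin.ext (by omega)

lemma SimpleGraph.Connected.adj_of_covers_consecutive {T : SimpleGraph ι} (hT : T.Connected)
    (hconv : ∀ c, T.IsPathConvex {t | P t c}) (hf : ∀ i, P (f i) i.castSucc ∧ P (f i) i.succ)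
    (hsep : ∀ t (i : Fin n) c, P t i.castSucc → P t i.succ → P t c →
      c = i.castSucc ∨ c = i.succ)
    (hsurj : Function.Surjective f) {i j : Fin n} (hij : i.val + 1 = j.val) :
    T.Adj (f i) (f j) := by
  have hne : f i ≠ f j :=
    (injective_of_covers_consecutive hf hsep).ne fun h => by rw [h] at hij; omega
  have hshared : j.castSucc = i.succ := Fin.ext (by simp [hij])
  obtain ⟨p, hp⟩ := hT.exists_isPath (f i) (f j)
  refine p.adj_of_forall_mem_support hne fun u hu => ?_
  obtain ⟨k, rfl⟩ := hsurj u
  have hk := hconv i.succ (hf i).2 (hshared ▸ (hf j).1) p hp _ hu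
  rcases hsep (f k) k i.succ (hf k).1 (hf k).2 hk with h | h
  · right
    congr 1
    ext
    simp only [Fin.ext_iff, Fin.val_castSucc, Fin.val_succ] at h
    omega
  · left
    rw [Fin.succ_inj.mp h]

end PathCover

section CliqueChain

variable (s : List Bool) (ts : List (List Bool))

/-- `cliqueVertex s ts (c, a)` is the `a`-th vertex of the clique `C_{c+1}`. -/
def cliqueVertex : Fin (s.length + 1) × Fin 6 ↪ GV s ts :=
  ⟨fun p => Sum.inl (Sum.inl p), fun _ _ h => by simpa using h⟩

lemma gGraph_adj_cliqueVertex {c d : Fin (s.length + 1)} {a b : Fin 6} (hne : (c, a) ≠ (d, b))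
    (hcd : c = d ∨ c.val + 1 = d.val ∨ d.val + 1 = c.val) :
    (GGraph s ts).Adj (cliqueVertex s ts (c, a)) (cliqueVertex s ts (d, b)) := by
  refine (SimpleGraph.fromRel_adj _ _ _).mpr
    ⟨(cliqueVertex s ts).injective.ne hne, ?_⟩
  simp only [cliqueVertex, gRel]
  rcases hcd with rfl | hcd | hcd
  · exact Or.inl (Or.inl ⟨rfl, fun hab => hne (by rw [hab])⟩)
  · exact Or.inl (Or.inr hcd)
  · exact Or.inr (Or.inr hcd)

/-- The clique `C_{i+1} ∪ C_{i+2}`. -/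
def consecutiveCliques (i : Fin s.length) : Finset (GV s ts) :=
  (({i.castSucc, i.succ} : Finset _) ×ˢ Finset.univ).map (cliqueVertex s ts)

lemma isClique_consecutiveCliques (i : Fin s.length) :
    (GGraph s ts).IsClique (consecutiveCliques s ts i : Set (GV s ts)) := by
  intro v hv w hw hvw
  simp only [consecutiveCliques, Finset.coe_map, Set.mem_image, Finset.mem_coe,
    Finset.mem_product, Finset.mem_insert, Finset.mem_singleton, Finset.mem_univ,
    and_true] at hv hw
  obtain ⟨⟨c, a⟩, hc, rfl⟩ := hv
  obtain ⟨⟨d, b⟩, hd, rfl⟩ := hw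
  refine gGraph_adj_cliqueVertex s ts (fun h => hvw (by rw [h])) ?_
  simp only [Fin.ext_iff, Fin.val_castSucc, Fin.val_succ] at hc hd ⊢
  omega

variable {s ts}

lemma six_mul_card_le_ncard {I : Finset (Fin (s.length + 1))} {B : Set (GV s ts)}
    (h : ∀ c ∈ I, ∀ a, cliqueVertex s ts (c, a) ∈ B) : 6 * I.card ≤ B.ncard := by
  calc 6 * I.card = ((I ×ˢ Finset.univ).map (cliqueVertex s ts)).card := by
        simp [mul_comm]
    _ ≤ B.ncard := by
        rw [← Set.ncard_coe_finset]
        refine Set.ncard_le_ncard ?_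
        intro v hv
        simp only [Finset.coe_map, Set.mem_image, Finset.mem_coe, Finset.mem_product,
          Finset.mem_univ, and_true] at hv
        obtain ⟨⟨c, a⟩, hc, rfl⟩ := hv
        exact h c hc a

lemma eq_or_eq_of_ncard_le_seventeen {B : Set (GV s ts)} (hB : B.ncard ≤ 17)
    {c₁ c₂ c₃ : Fin (s.length + 1)} (h₁₂ : c₁ ≠ c₂) (h₁ : ∀ a, cliqueVertex s ts (c₁, a) ∈ B)
    (h₂ : ∀ a, cliqueVertex s ts (c₂, a) ∈ B) (h₃ : ∀ a, cliqueVertex s ts (c₃, a) ∈ B) :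
    c₃ = c₁ ∨ c₃ = c₂ := by
  by_contra! h
  have h18 := six_mul_card_le_ncard (I := {c₁, c₂, c₃}) (B := B) (by simp [h₁, h₂, h₃])
  rw [Finset.card_eq_three.mpr ⟨c₁, c₂, c₃, h₁₂, h.1.symm, h.2.symm, rfl⟩] at h18
  omega

end CliqueChain

theorem treeDecomp_is_pathDecomp_general (s : List Bool) (ts : List (List Bool))
    (ι : Type) [Fintype ι] (T : SimpleGraph ι) (hT : T.IsTree)
    (X : ι → Set (GV s ts))
    (hdec : IsValidDecomp (GGraph s ts) T X)
    (hwidth : ∀ t : ι, (X t).ncard ≤ 17)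
    (hbags : Fintype.card ι ≤ s.length) :
    Fintype.card ι = s.length ∧
    ∃ e : Fin s.length ≃ ι,
      (∀ a b : Fin s.length, T.Adj (e a) (e b) ↔ (a.val + 1 = b.val ∨ b.val + 1 = a.val)) ∧
      (∀ i : Fin s.length, ∀ x : Fin 6,
        (Sum.inl (Sum.inl (i.castSucc, x)) : GV s ts) ∈ X (e i) ∧
        (Sum.inl (Sum.inl (i.succ, x)) : GV s ts) ∈ X (e i)) := by
  set P : ι → Fin (s.length + 1) → Prop := fun t c => ∀ a, cliqueVertex s ts (c, a) ∈ X t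
  have hbag : ∀ i : Fin s.length, ∃ t, P t i.castSucc ∧ P t i.succ := fun i => by
    obtain ⟨t, ht⟩ := hdec.exists_subset_of_isClique hT (by simp [consecutiveCliques])
      (isClique_consecutiveCliques s ts i)
    exact ⟨t, fun a => ht (by simp [consecutiveCliques]),
      fun a => ht (by simp [consecutiveCliques])⟩
  choose f hf using hbag
  have hsep : ∀ t (i : Fin s.length) c, P t i.castSucc → P t i.succ → P t c →
      c = i.castSucc ∨ c = i.succ := fun t i c =>
    eq_or_eq_of_ncard_le_seventeen (hwidth t) Fin.castSucc_lt_succ.ne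
  have hconv : ∀ c, T.IsPathConvex {t | P t c} := fun c _ _ ha hb p hp x hx a =>
    hdec.isPathConvex hT.isAcyclic _ (ha a) (hb a) p hp x hx
  have hinj := injective_of_covers_consecutive hf hsep
  have hcard : Fintype.card ι = s.length :=
    le_antisymm hbags (by simpa using Fintype.card_le_of_injective f hinj)
  have hbij : Function.Bijective f :=
    (Fintype.bijective_iff_injective_and_card f).mpr ⟨hinj, by simp [hcard]⟩
  refine ⟨hcard, Equiv.ofBijective f hbij, hT.adj_iff_of_adj_succ _ fun i j hij => ?_,
    fun i a => ⟨(hf i).1 a, (hf i).2 a⟩⟩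
  exact hT.connected.adj_of_covers_consecutive hconv hf hsep hbij.2 hij

/-- Every tree decomposition of `G(s; t_1,…,t_n)` of width at most `16` with at most `|s|`
bags is a path decomposition: it has exactly `|s|` bags, its underlying tree is a path, and
the bags can be ordered along this path as `X_1,…,X_{|s|}` with `C_i ∪ C_{i+1} ⊆ X_i`. -/
theorem treeDecomp_is_pathDecomp (s : List Bool) (ts : List (List Bool))
    (hs : 2 ≤ s.length)
    (hlen : (ts.map List.length).sum = s.length)
    (ι : Type) [Fintype ι] (T : SimpleGraph ι) (hT : T.IsTree)
    (X : ι → Set (GV s ts))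
    (hdec : IsValidDecomp (GGraph s ts) T X)
    (hwidth : ∀ t : ι, (X t).ncard ≤ 17)
    (hbags : Fintype.card ι ≤ s.length) :
    Fintype.card ι = s.length ∧
    ∃ e : Fin s.length ≃ ι,
      (∀ a b : Fin s.length, T.Adj (e a) (e b) ↔ (a.val + 1 = b.val ∨ b.val + 1 = a.val)) ∧
      (∀ i : Fin s.length, ∀ x : Fin 6,
        (Sum.inl (Sum.inl (i.castSucc, x)) : GV s ts) ∈ X (e i) ∧
        (Sum.inl (Sum.inl (i.succ, x)) : GV s ts) ∈ X (e i)) :=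
  treeDecomp_is_pathDecomp_general s ts ι T hT X hdec hwidth hbags
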